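/- Let K₁, K₂ ⊂ ℝ^4 be disjoint compact sets such that ℋ^2(K₁ × K₂) < ∞, where K₁ × K₂ ⊆ ℝ^4 × ℝ^4 carries the sup product metric. Then there exists a unit vector v ∈ ℝ^4 such that no line with direction v passing through a point of K₁ meets K₂; that is, (K₁ + ℝv) ∩ K₂ = ∅, where K₁ + ℝv = {x + tv : x ∈ K₁, t ∈ ℝ}. -/

import Mathlib

/-!
Record each segment `[x, y]` with `x ∈ K₁`, `y ∈ K₂` and `x`, `y` having different last
coordinates by its slope: the direction `y - x` rescaled to have last coordinate `1`, read as a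
point of `ℝⁿ`. The slope map is smooth, hence locally Lipschitz, so the set of slopes has
Hausdorff dimension at most `dimH (K₁ × K₂) < n` and misses some `w ∈ ℝⁿ`. The direction
`(w, 1)` then works: a line through `x ∈ K₁` in that direction can only meet `K₂` at a point
`y ≠ x` (disjointness), and the slope of `[x, y]` would be `w`.
-/

open MeasureTheory Set

theorem dimH_image_le_of_contDiffOn_of_isOpen {E F : Type*} [NormedAddCommGroup E]
    [NormedSpace ℝ E] [FiniteDimensional ℝ E] [NormedAddCommGroup F] [NormedSpace ℝ F]
    {f : E → F} {s t : Set E} (hf : ContDiffOn ℝ 1 f s) (hs : IsOpen s) (ht : t ⊆ s) :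
    dimH (f '' t) ≤ dimH t :=
  dimH_image_le_of_locally_lipschitzOn fun _ hx =>
    let ⟨C, u, hu, hfu⟩ := (hf.contDiffAt (hs.mem_nhds (ht hx))).exists_lipschitzOnWith
    ⟨C, u, mem_nhdsWithin_of_mem_nhds hu, hfu⟩

noncomputable def segmentSlope (n : ℕ)
    (p : EuclideanSpace ℝ (Fin (n + 1)) × EuclideanSpace ℝ (Fin (n + 1))) : Fin n → ℝ :=
  fun i => (p.2 i.castSucc - p.1 i.castSucc) / (p.2 (Fin.last n) - p.1 (Fin.last n))

theorem isOpen_setOf_last_sub_ne_zero (n : ℕ) :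
    IsOpen {p : EuclideanSpace ℝ (Fin (n + 1)) × EuclideanSpace ℝ (Fin (n + 1)) |
      p.2 (Fin.last n) - p.1 (Fin.last n) ≠ 0} :=
  isOpen_ne_fun (by fun_prop) continuous_const

theorem contDiffOn_segmentSlope (n : ℕ) :
    ContDiffOn ℝ 1 (segmentSlope n)
      {p | p.2 (Fin.last n) - p.1 (Fin.last n) ≠ 0} := by
  rw [contDiffOn_pi]
  intro i
  have coord (j : Fin (n + 1)) : ContDiff ℝ 1
      (fun p : EuclideanSpace ℝ (Fin (n + 1)) × EuclideanSpace ℝ (Fin (n + 1)) =>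
        p.2 j - p.1 j) := by fun_prop
  exact (coord i.castSucc).contDiffOn.div (coord (Fin.last n)).contDiffOn fun p hp => hp

theorem segmentSlope_add_smul_snoc {n : ℕ} (x : EuclideanSpace ℝ (Fin (n + 1)))
    (w : Fin n → ℝ) {s : ℝ} (hs : s ≠ 0) :
    segmentSlope n (x, x + s • WithLp.toLp 2 (Fin.snoc w 1)) = w := by
  funext i
  simp [segmentSlope, hs]

theorem exists_unit_direction_lines_avoid_of_dimH_prod_lt {n : ℕ}
    {K₁ K₂ : Set (EuclideanSpace ℝ (Fin (n + 1)))} (hdisj : Disjoint K₁ K₂)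
    (hdim : dimH (K₁ ×ˢ K₂) < n) :
    ∃ v : EuclideanSpace ℝ (Fin (n + 1)), ‖v‖ = 1 ∧ ∀ x ∈ K₁, ∀ t : ℝ, x + t • v ∉ K₂ := by
  set S := {p : EuclideanSpace ℝ (Fin (n + 1)) × EuclideanSpace ℝ (Fin (n + 1)) |
    p.2 (Fin.last n) - p.1 (Fin.last n) ≠ 0}
  have hslopes : dimH (segmentSlope n '' (K₁ ×ˢ K₂ ∩ S)) < Module.finrank ℝ (Fin n → ℝ) := by
    rw [Module.finrank_fin_fun]
    calc _ ≤ dimH (K₁ ×ˢ K₂ ∩ S) := dimH_image_le_of_contDiffOn_of_isOpen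
            (contDiffOn_segmentSlope n) (isOpen_setOf_last_sub_ne_zero n) inter_subset_right
      _ ≤ dimH (K₁ ×ˢ K₂) := dimH_mono inter_subset_left
      _ < n := hdim
  obtain ⟨w, hw⟩ := (dense_compl_of_dimH_lt_finrank hslopes).nonempty
  set u : EuclideanSpace ℝ (Fin (n + 1)) := WithLp.toLp 2 (Fin.snoc w 1)
  have hu : u ≠ 0 := fun h => by simpa [u] using congrArg (· (Fin.last n)) h
  refine ⟨‖u‖⁻¹ • u, norm_smul_inv_norm hu, fun x hx t hxt => hw ?_⟩
  have ht : t ≠ 0 := by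
    rintro rfl
    exact disjoint_left.1 hdisj hx (by simpa using hxt)
  rw [smul_smul] at hxt
  have hs : t * ‖u‖⁻¹ ≠ 0 := mul_ne_zero ht (inv_ne_zero (norm_ne_zero_iff.2 hu))
  refine ⟨(x, x + (t * ‖u‖⁻¹) • u), ⟨⟨hx, hxt⟩, ?_⟩, segmentSlope_add_smul_snoc x w hs⟩
  simpa [S, u] using hs

theorem stmt13_general (K₁ K₂ : Set (EuclideanSpace ℝ (Fin 4)))
    (hdisj : Disjoint K₁ K₂)
    (hH : μH[(2 : ℝ)] (K₁ ×ˢ K₂) < ⊤) :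
    ∃ v : EuclideanSpace ℝ (Fin 4), ‖v‖ = 1 ∧
      ∀ x ∈ K₁, ∀ t : ℝ, x + t • v ∉ K₂ := by
  have hdim : dimH (K₁ ×ˢ K₂) ≤ (2 : NNReal) :=
    dimH_le_of_hausdorffMeasure_ne_top (by exact_mod_cast hH.ne)
  exact exists_unit_direction_lines_avoid_of_dimH_prod_lt hdisj
    (hdim.trans_lt (by norm_num))

/-- **Theorem (Statement 13).** If `K₁, K₂ ⊂ ℝ⁴` are disjoint compact sets with
`ℋ²(K₁ × K₂) < ∞` (sup product metric on `ℝ⁴ × ℝ⁴`), then there is a unit vector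
`v ∈ ℝ⁴` such that no line of direction `v` through a point of `K₁` meets `K₂`. -/
theorem stmt13 (K₁ K₂ : Set (EuclideanSpace ℝ (Fin 4)))
    (h₁ : IsCompact K₁) (h₂ : IsCompact K₂) (hdisj : Disjoint K₁ K₂)
    (hH : μH[(2 : ℝ)] (K₁ ×ˢ K₂) < ⊤) :
    ∃ v : EuclideanSpace ℝ (Fin 4), ‖v‖ = 1 ∧
      ∀ x ∈ K₁, ∀ t : ℝ, x + t • v ∉ K₂ :=
  stmt13_general K₁ K₂ hdisj hH
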